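/- Fix u ∈ {1,…,n−1}, real numbers β*_1,…,β*_p, and let β* ∈ ℝ^{(n−1)×p} have all rows zero except row u, whose entries are β*_1,…,β*_p. Let W be an n×p random matrix whose entries are independent, centered, square-integrable real random variables with common variance σ², and set Ȳ = X̄β* + W. Then for every i ∈ {1,…,n−1}: E‖(X̄ᵀȲ)_{i,·}‖² = p · β̄_p² · d_i² d_u² · (min(i,u))² (n − max(i,u))² / n² + p · d_i² · ( i(n−i)/n ) · σ², where β̄_p² = (1/p) Σ_{j=1}^{p} (β*_j)². -/

import Mathlib

/-!
Write `G = X̄ᵀX̄`. Since `β*` has the single nonzero row `u`, the entry `(X̄ᵀȲ)_{i,k}` equals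
`G_{iu} b_k + ∑_a X̄_{a,i} W_{a,k}`, whose second moment is its squared mean `(G_{iu} b_k)²` plus its
variance, and by pairwise independence the variance is `∑_a X̄_{a,i}² σ² = G_{ii} σ²`. Centring the
columns subtracts `(column sum)(column sum)/n` from the Gram matrix of `X`, and for the step design
this gives `G_{jl} = d_j d_l min(j,l) (n - max(j,l)) / n`.
-/

open Matrix BigOperators MeasureTheory ProbabilityTheory

/-- The `n × (n-1)` design matrix with `X i j = d j` for `i > j` (1-based). -/
noncomputable def designX (n : ℕ) (d : Fin (n-1) → ℝ) : Matrix (Fin n) (Fin (n-1)) ℝ :=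
  fun i j => if (j : ℕ) < (i : ℕ) then d j else 0

noncomputable def centerCols {n m : ℕ} (M : Matrix (Fin n) (Fin m) ℝ) :
    Matrix (Fin n) (Fin m) ℝ :=
  fun i j => M i j - (∑ k : Fin n, M k j) / n

noncomputable def Xbar (n : ℕ) (d : Fin (n-1) → ℝ) : Matrix (Fin n) (Fin (n-1)) ℝ :=
  centerCols (designX n d)

lemma Fin.sum_ite_le_val {M : Type*} [AddCommMonoid M] (n m : ℕ) (r : M) :
    ∑ a : Fin n, (if m ≤ (a : ℕ) then r else 0) = (n - m) • r := by
  have hcard : (Finset.univ.filter fun a : Fin n => m ≤ (a : ℕ)).card = n - m := by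
    simp only [← not_lt]
    rw [Finset.filter_not, Finset.card_sdiff_of_subset (Finset.filter_subset _ _),
      Fin.card_filter_val_lt, Finset.card_univ, Fintype.card_fin]
    omega
  rw [Finset.sum_ite, Finset.sum_const_zero, add_zero, Finset.sum_const, hcard]

lemma centerCols_transpose_mul_self_apply {n m : ℕ} (M : Matrix (Fin n) (Fin m) ℝ)
    (j l : Fin m) :
    ((centerCols M)ᵀ * centerCols M) j l
      = (Mᵀ * M) j l - (∑ a, M a j) * (∑ a, M a l) / n := by
  rcases Nat.eq_zero_or_pos n with rfl | hn
  · simp [mul_apply]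
  simp only [mul_apply, transpose_apply, centerCols, sub_mul, mul_sub, Finset.sum_sub_distrib,
    ← Finset.sum_mul, ← Finset.mul_sum, Finset.sum_const, Finset.card_univ, Fintype.card_fin,
    nsmul_eq_mul]
  field_simp
  ring

lemma sum_designX_apply (n : ℕ) (d : Fin (n-1) → ℝ) (j : Fin (n-1)) :
    ∑ a, designX n d a j = ((n - ((j : ℕ) + 1) : ℕ) : ℝ) * d j := by
  simp only [designX, Nat.lt_iff_add_one_le, Fin.sum_ite_le_val, nsmul_eq_mul]

lemma designX_transpose_mul_self_apply (n : ℕ) (d : Fin (n-1) → ℝ) (j l : Fin (n-1)) :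
    ((designX n d)ᵀ * designX n d) j l
      = ((n - (max (j : ℕ) l + 1) : ℕ) : ℝ) * (d j * d l) := by
  have h : ∀ a : Fin n, designX n d a j * designX n d a l
      = if max (j : ℕ) l + 1 ≤ a then d j * d l else 0 := by
    intro a
    simp only [designX]
    split_ifs <;> first | rfl | (exfalso; omega) | simp
  simp only [mul_apply, transpose_apply, h, Fin.sum_ite_le_val, nsmul_eq_mul]

lemma Xbar_transpose_mul_self_apply (n : ℕ) (d : Fin (n-1) → ℝ) (j l : Fin (n-1)) :
    ((Xbar n d)ᵀ * Xbar n d) j l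
      = d j * d l * ((min ((j : ℕ) + 1) ((l : ℕ) + 1) : ℕ) : ℝ)
          * ((n : ℝ) - ((max ((j : ℕ) + 1) ((l : ℕ) + 1) : ℕ) : ℝ)) / n := by
  have hj := j.isLt
  have hl := l.isLt
  have hn : (n : ℝ) ≠ 0 := by norm_cast; omega
  rw [Xbar, centerCols_transpose_mul_self_apply, designX_transpose_mul_self_apply,
    sum_designX_apply, sum_designX_apply]
  rcases le_total (j : ℕ) l with h | h <;>
    [rw [max_eq_right h, min_eq_left (by omega), max_eq_right (by omega)];
     rw [max_eq_left h, min_eq_right (by omega), max_eq_left (by omega)]] <;>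
  · push_cast [Nat.cast_sub (by omega : (l : ℕ) + 1 ≤ n), Nat.cast_sub (by omega : (j : ℕ) + 1 ≤ n)]
    field_simp
    ring

lemma transpose_mul_mul_add_apply_of_single_row {m r s : Type*} [Fintype m] [Fintype r]
    [DecidableEq r] (A : Matrix m r ℝ) (B : Matrix r s ℝ) (E : Matrix m s ℝ) {u : r}
    {b : s → ℝ} (hB : ∀ j k, B j k = if j = u then b k else 0) (i : r) (k : s) :
    (Aᵀ * (A * B + E)) i k = (Aᵀ * A) i u * b k + ∑ a, A a i * E a k := by
  rw [Matrix.mul_add, ← Matrix.mul_assoc, Matrix.add_apply]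
  simp [mul_apply, hB]

section SecondMoment

variable {Ω ι : Type*} [MeasurableSpace Ω] {μ : Measure Ω} [Fintype ι] {Z : ι → Ω → ℝ}

lemma variance_sum_const_mul_of_pairwise_indepFun (hL2 : ∀ q, MemLp (Z q) 2 μ)
    (hindep : Pairwise fun q r => IndepFun (Z q) (Z r) μ) (x : ι → ℝ) :
    Var[fun ω => ∑ q, x q * Z q ω; μ] = ∑ q, x q ^ 2 * Var[Z q; μ] := by
  have hsum : (fun ω => ∑ q, x q * Z q ω) = ∑ q, fun ω => x q * Z q ω := by
    ext ω; simp
  rw [hsum, IndepFun.variance_sum (fun q _ => (hL2 q).const_mul (x q))]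
  · simp only [variance_const_mul]
  · intro q _ r _ hqr
    exact (hindep hqr).comp (measurable_const_mul (x q)) (measurable_const_mul (x r))

lemma memLp_const_add_sum_mul [IsFiniteMeasure μ] (hL2 : ∀ q, MemLp (Z q) 2 μ) (c : ℝ)
    (x : ι → ℝ) : MemLp (fun ω => c + ∑ q, x q * Z q ω) 2 μ :=
  (memLp_const c).add (memLp_finsetSum _ fun q _ => (hL2 q).const_mul (x q))

variable [IsProbabilityMeasure μ] (hL2 : ∀ q, MemLp (Z q) 2 μ)
  (hindep : Pairwise fun q r => IndepFun (Z q) (Z r) μ)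
include hL2 hindep

lemma integral_sq_const_add_sum_mul (c : ℝ) (x : ι → ℝ) :
    ∫ ω, (c + ∑ q, x q * Z q ω) ^ 2 ∂μ
      = (c + ∑ q, x q * ∫ ω, Z q ω ∂μ) ^ 2 + ∑ q, x q ^ 2 * Var[Z q; μ] := by
  have hS : MemLp (fun ω => ∑ q, x q * Z q ω) 2 μ :=
    memLp_finsetSum _ fun q _ => (hL2 q).const_mul (x q)
  have hmean : ∫ ω, (c + ∑ q, x q * Z q ω) ∂μ = c + ∑ q, x q * ∫ ω, Z q ω ∂μ := by
    rw [integral_add (integrable_const c) (hS.integrable one_le_two),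
      integral_finsetSum _ fun q _ => ((hL2 q).integrable one_le_two).const_mul (x q)]
    simp [integral_const_mul]
  have hvar := variance_eq_sub (memLp_const_add_sum_mul hL2 c x)
  rw [variance_const_add hS.aestronglyMeasurable,
    variance_sum_const_mul_of_pairwise_indepFun hL2 hindep] at hvar
  rw [← hmean]
  simp only [Pi.pow_apply] at hvar
  linarith

lemma integral_sq_const_add_sum_mul_of_centered {σ : ℝ} (hcent : ∀ q, ∫ ω, Z q ω ∂μ = 0)
    (hvar : ∀ q, ∫ ω, Z q ω ^ 2 ∂μ = σ ^ 2) (c : ℝ) (x : ι → ℝ) :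
    ∫ ω, (c + ∑ q, x q * Z q ω) ^ 2 ∂μ = c ^ 2 + (∑ q, x q ^ 2) * σ ^ 2 := by
  have hvarZ : ∀ q, Var[Z q; μ] = σ ^ 2 := fun q => by
    rw [variance_eq_sub (hL2 q), hcent]
    simpa using hvar q
  simp only [integral_sq_const_add_sum_mul hL2 hindep, hcent, hvarZ, mul_zero,
    Finset.sum_const_zero, add_zero, Finset.sum_mul]

end SecondMoment

theorem statement10_general (n : ℕ) (d : Fin (n-1) → ℝ)
    (p : ℕ) (u : Fin (n-1)) (b : Fin p → ℝ) (σ : ℝ)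
    (βstar : Matrix (Fin (n-1)) (Fin p) ℝ)
    (hβ : ∀ j k, βstar j k = if j = u then b k else 0)
    {Ω : Type*} [MeasurableSpace Ω] (μ : Measure Ω) [IsProbabilityMeasure μ]
    (W : Fin n × Fin p → Ω → ℝ)
    (hindep : iIndepFun W μ)
    (hL2 : ∀ q, MemLp (W q) 2 μ)
    (hcent : ∀ q, ∫ ω, W q ω ∂μ = 0)
    (hvar : ∀ q, ∫ ω, (W q ω) ^ 2 ∂μ = σ ^ 2)
    (Ybar : Ω → Matrix (Fin n) (Fin p) ℝ)
    (hY : ∀ ω a k, Ybar ω a k = (Xbar n d * βstar) a k + W (a, k) ω) :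
    ∀ i : Fin (n-1),
      ∫ ω, (∑ k : Fin p, (((Xbar n d)ᵀ * Ybar ω) i k) ^ 2) ∂μ =
        (p : ℝ) * ((1 / (p : ℝ)) * ∑ j : Fin p, (b j) ^ 2) * (d i) ^ 2 * (d u) ^ 2
            * (((min ((i : ℕ) + 1) ((u : ℕ) + 1) : ℕ) : ℝ)) ^ 2
            * ((n : ℝ) - ((max ((i : ℕ) + 1) ((u : ℕ) + 1) : ℕ) : ℝ)) ^ 2 / (n : ℝ) ^ 2
          + (p : ℝ) * (d i) ^ 2 * ((((i : ℕ) + 1 : ℝ)) * ((n : ℝ) - ((i : ℕ) + 1)) / n)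
            * σ ^ 2 := by
  intro i
  set G := (Xbar n d)ᵀ * Xbar n d
  have hrow : ∀ ω k, ((Xbar n d)ᵀ * Ybar ω) i k
      = G i u * b k + ∑ a, Xbar n d a i * W (a, k) ω := fun ω k => by
    have hYω : Ybar ω = Xbar n d * βstar + Matrix.of fun a k => W (a, k) ω := by
      ext a k; simp [hY]
    rw [hYω, transpose_mul_mul_add_apply_of_single_row _ _ _ hβ]
    rfl
  have hk : ∀ k, ∫ ω, (((Xbar n d)ᵀ * Ybar ω) i k) ^ 2 ∂μ
      = (G i u * b k) ^ 2 + G i i * σ ^ 2 := fun k => by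
    have hindep_k : Pairwise fun a a' : Fin n => IndepFun (W (a, k)) (W (a', k)) μ :=
      fun a a' h => hindep.indepFun fun h' => h (congrArg Prod.fst h')
    simp only [hrow]
    rw [integral_sq_const_add_sum_mul_of_centered (fun a => hL2 (a, k)) hindep_k
      (fun a => hcent (a, k)) (fun a => hvar (a, k))]
    simp only [G, mul_apply, transpose_apply, sq]
  have hintegrable : ∀ k, Integrable (fun ω => (((Xbar n d)ᵀ * Ybar ω) i k) ^ 2) μ := fun k => by
    simp only [hrow]
    exact (memLp_const_add_sum_mul (fun a => hL2 (a, k)) _ _).integrable_sq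
  have hp_mean : (p : ℝ) * (1 / p * ∑ j, b j ^ 2) = ∑ j, b j ^ 2 := by
    rcases Nat.eq_zero_or_pos p with rfl | hp_pos
    · simp
    · field_simp
  rw [integral_finsetSum _ fun k _ => hintegrable k, hp_mean]
  simp only [hk, Finset.sum_add_distrib, mul_pow, ← Finset.mul_sum, Finset.sum_const,
    Finset.card_univ, Fintype.card_fin, nsmul_eq_mul]
  simp only [G, Xbar_transpose_mul_self_apply, min_self, max_self]
  push_cast
  ring

/-- Single shared change-point model: `β*` has all rows zero except row
`u`, with entries `b 1, …, b p`; `W` has independent, centered, square-integrable entries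
of common variance `σ²`; and `Ȳ = X̄β* + W`.  Then for every `i`,
`E‖(X̄ᵀȲ)_{i,·}‖² = p β̄ₚ² dᵢ² d_u² min(i,u)²(n − max(i,u))²/n² + p dᵢ² (i(n−i)/n) σ²`
with `β̄ₚ² = (1/p) Σⱼ bⱼ²` (1-based indices `i ↦ (i:ℕ)+1`, `u ↦ (u:ℕ)+1`). -/
theorem statement10 (n : ℕ) (hn : 2 ≤ n) (d : Fin (n-1) → ℝ) (hd : ∀ j, 0 < d j)
    (p : ℕ) (hp : 1 ≤ p) (u : Fin (n-1)) (b : Fin p → ℝ) (σ : ℝ)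
    (βstar : Matrix (Fin (n-1)) (Fin p) ℝ)
    (hβ : ∀ j k, βstar j k = if j = u then b k else 0)
    {Ω : Type*} [MeasurableSpace Ω] (μ : Measure Ω) [IsProbabilityMeasure μ]
    (W : Fin n × Fin p → Ω → ℝ)
    (hmeas : ∀ q, Measurable (W q))
    (hindep : iIndepFun W μ)
    (hL2 : ∀ q, MemLp (W q) 2 μ)
    (hcent : ∀ q, ∫ ω, W q ω ∂μ = 0)
    (hvar : ∀ q, ∫ ω, (W q ω) ^ 2 ∂μ = σ ^ 2)
    (Ybar : Ω → Matrix (Fin n) (Fin p) ℝ)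
    (hY : ∀ ω a k, Ybar ω a k = (Xbar n d * βstar) a k + W (a, k) ω) :
    ∀ i : Fin (n-1),
      ∫ ω, (∑ k : Fin p, (((Xbar n d)ᵀ * Ybar ω) i k) ^ 2) ∂μ =
        (p : ℝ) * ((1 / (p : ℝ)) * ∑ j : Fin p, (b j) ^ 2) * (d i) ^ 2 * (d u) ^ 2
            * (((min ((i : ℕ) + 1) ((u : ℕ) + 1) : ℕ) : ℝ)) ^ 2
            * ((n : ℝ) - ((max ((i : ℕ) + 1) ((u : ℕ) + 1) : ℕ) : ℝ)) ^ 2 / (n : ℝ) ^ 2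
          + (p : ℝ) * (d i) ^ 2 * ((((i : ℕ) + 1 : ℝ)) * ((n : ℝ) - ((i : ℕ) + 1)) / n)
            * σ ^ 2 :=
  statement10_general n d p u b σ βstar hβ μ W hindep hL2 hcent hvar Ybar hY
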